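/- Let ε ∈ [0,1) and let 𝓟 and 𝓔 be nonempty closed sets of density matrices on ℂ^d such that T(𝓟,𝓔) := inf_{ρ∈𝓟, τ∈𝓔} T(ρ,τ) ≤ ε. Then for every M > 1 there exists a CPTP map F from 2×2 complex matrices to d×d complex matrices such that F(π_{M′}) ∈ 𝓔 for every M′ ∈ [M,∞) and T(F(|1⟩⟨1|), ρ) ≤ ε for some ρ ∈ 𝓟. -/

import Mathlib

open Matrix ComplexOrder

/-- Trace norm of a complex matrix: the trace of `sqrt(AᴴA)` (sum of singular values). -/
noncomputable def traceNorm {n : Type*} [Fintype n] [DecidableEq n]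
    (A : Matrix n n ℂ) : ℝ :=
  (((Matrix.posSemidef_conjTranspose_mul_self A).1.eigenvectorUnitary.1 *
      diagonal (((↑) : ℝ → ℂ) ∘ (√·) ∘ (Matrix.posSemidef_conjTranspose_mul_self A).1.eigenvalues) *
      (star (Matrix.posSemidef_conjTranspose_mul_self A).1.eigenvectorUnitary : Matrix n n ℂ)).trace).re

/-- Trace distance `T(X,Y) = ‖X - Y‖₁ / 2`. -/
noncomputable def traceDist {n : Type*} [Fintype n] [DecidableEq n]
    (X Y : Matrix n n ℂ) : ℝ :=
  traceNorm (X - Y) / 2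

/-- A density matrix: positive semidefinite with unit trace. -/
def IsDensityMatrix {n : Type*} [Fintype n] (ρ : Matrix n n ℂ) : Prop :=
  ρ.PosSemidef ∧ ρ.trace = 1

/-- The battery Gibbs state `π_M = diag(1 - 1/M, 1/M)`. -/
noncomputable def piM (M : ℝ) : Matrix (Fin 2) (Fin 2) ℂ :=
  Matrix.diagonal ![((1 - 1/M : ℝ) : ℂ), ((1/M : ℝ) : ℂ)]

/-- The excited battery state `|1⟩⟨1| = diag(0,1)`. -/
def ket1 : Matrix (Fin 2) (Fin 2) ℂ :=
  Matrix.diagonal ![0, 1]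

/-- A test (POVM effect): `0 ≤ E ≤ I`. -/
def IsTest {n : Type*} [Fintype n] [DecidableEq n] (E : Matrix n n ℂ) : Prop :=
  E.PosSemidef ∧ (1 - E).PosSemidef

/-- Choi matrix `Σ_{ij} E_{ij} ⊗ F(E_{ij})` of a linear map on matrices. -/
noncomputable def choiMatrix {n m : Type*} [Fintype n] [DecidableEq n] [Fintype m]
    (F : Matrix n n ℂ →ₗ[ℂ] Matrix m m ℂ) :
    Matrix (n × m) (n × m) ℂ :=
  fun p q => F (Matrix.single p.1 q.1 1) p.2 q.2

/-- Completely positive (positive semidefinite Choi matrix) and trace preserving. -/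
def IsCPTP {n m : Type*} [Fintype n] [DecidableEq n] [Fintype m]
    (F : Matrix n n ℂ →ₗ[ℂ] Matrix m m ℂ) : Prop :=
  (choiMatrix F).PosSemidef ∧ ∀ X, (F X).trace = X.trace

/-- `n`-fold Kronecker (tensor) power of a `2 × 2` matrix, indexed by bit strings. -/
def tensPow (A : Matrix (Fin 2) (Fin 2) ℂ) (n : ℕ) :
    Matrix (Fin n → Fin 2) (Fin n → Fin 2) ℂ :=
  fun x y => ∏ i, A (x i) (y i)

/-- `ε`-ball (in trace distance) of density matrices around a set `𝓟`. -/
noncomputable def metBall {n : Type*} [Fintype n] [DecidableEq n]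
    (ε : ℝ) (P : Set (Matrix n n ℂ)) : Set (Matrix n n ℂ) :=
  {ω | IsDensityMatrix ω ∧ ∃ ρ ∈ P, traceDist ω ρ ≤ ε}

/-! The infimum defining `T(𝓟, 𝓔)` is attained: a density matrix has operator norm at most `1`,
so closed sets of density matrices are compact, and the trace norm `A ↦ tr |A|` is continuous.
If `T(ρ, τ) ≤ ε` with `ρ ∈ 𝓟` and `τ ∈ 𝓔`, the replacement channel `X ↦ tr(X) τ` works: it is
CPTP and sends every battery state, in particular each `π_{M'}` and `|1⟩⟨1|`, to `τ`. -/

section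
open scoped MatrixOrder

variable {n : Type*} [Fintype n] [DecidableEq n]

theorem traceNorm_eq_re_trace_abs (A : Matrix n n ℂ) : traceNorm A = (CFC.abs A).trace.re := by
  have hA := posSemidef_conjTranspose_mul_self A
  rw [CFC.abs, star_eq_conjTranspose, CFC.sqrt_eq_real_sqrt _ hA.nonneg, cfcₙ_eq_cfc,
    hA.1.cfc_eq, IsHermitian.cfc, Unitary.conjStarAlgAut_apply, traceNorm]
  rfl

theorem traceDist_comm (X Y : Matrix n n ℂ) : traceDist X Y = traceDist Y X := by
  rw [traceDist, traceDist, ← neg_sub, traceNorm_eq_re_trace_abs, traceNorm_eq_re_trace_abs,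
    CFC.abs_neg]

/- The L2 operator norm makes matrices a C⋆-algebra and induces their usual topology, so its
compactness and continuity results apply to the product topology used here. -/
theorem continuous_traceNorm : Continuous (traceNorm : Matrix n n ℂ → ℝ) := by
  simp only [funext traceNorm_eq_re_trace_abs]
  open scoped Matrix.Norms.L2Operator in
  exact Complex.continuous_re.comp CFC.continuous_abs.matrix_trace

theorem continuous_traceDist :
    Continuous fun p : Matrix n n ℂ × Matrix n n ℂ => traceDist p.1 p.2 :=
  (continuous_traceNorm.comp (continuous_fst.sub continuous_snd)).div_const 2

open scoped Matrix.Norms.L2Operator in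
theorem IsDensityMatrix.l2_opNorm_le_one {ρ : Matrix n n ℂ} (hρ : IsDensityMatrix ρ) :
    ‖ρ‖ ≤ 1 := by
  obtain ⟨hpsd, htr⟩ := hρ
  cases isEmpty_or_nonempty n
  · simp [Subsingleton.elim ρ 0]
  obtain ⟨k, hk⟩ : ‖ρ‖ ∈ Set.range hpsd.1.eigenvalues := by
    rw [← hpsd.1.spectrum_real_eq_range_eigenvalues]
    exact CStarAlgebra.norm_mem_spectrum_of_nonneg hpsd.nonneg
  have hsum : ∑ i, hpsd.1.eigenvalues i = 1 := by
    have h := hpsd.1.trace_eq_sum_eigenvalues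
    rw [htr, ← RCLike.ofReal_sum, eq_comm] at h
    exact RCLike.ofReal_injective (h.trans RCLike.ofReal_one.symm)
  calc ‖ρ‖ = hpsd.1.eigenvalues k := hk.symm
    _ ≤ ∑ i, hpsd.1.eigenvalues i :=
      Finset.single_le_sum (fun i _ => hpsd.eigenvalues_nonneg i) (Finset.mem_univ k)
    _ = 1 := hsum

theorem IsClosed.isCompact_of_isDensityMatrix {P : Set (Matrix n n ℂ)} (hPcl : IsClosed P)
    (hP : ∀ ρ ∈ P, IsDensityMatrix ρ) : IsCompact P := by
  open scoped Matrix.Norms.L2Operator in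
  exact (ProperSpace.isCompact_closedBall (0 : Matrix n n ℂ) 1).of_isClosed_subset hPcl
    fun ρ hρ => mem_closedBall_zero_iff.mpr (hP ρ hρ).l2_opNorm_le_one

theorem exists_traceDist_eq_sInf {P E : Set (Matrix n n ℂ)}
    (hPne : P.Nonempty) (hEne : E.Nonempty)
    (hP : ∀ ρ ∈ P, IsDensityMatrix ρ) (hE : ∀ τ ∈ E, IsDensityMatrix τ)
    (hPcl : IsClosed P) (hEcl : IsClosed E) :
    ∃ ρ ∈ P, ∃ τ ∈ E, traceDist ρ τ = sInf {r : ℝ | ∃ ρ ∈ P, ∃ τ ∈ E, r = traceDist ρ τ} := by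
  have hS : {r : ℝ | ∃ ρ ∈ P, ∃ τ ∈ E, r = traceDist ρ τ} =
      (fun p : Matrix n n ℂ × Matrix n n ℂ => traceDist p.1 p.2) '' P ×ˢ E := by
    ext r
    simp [eq_comm]
  have hcpt : IsCompact (P ×ˢ E) :=
    (hPcl.isCompact_of_isDensityMatrix hP).prod (hEcl.isCompact_of_isDensityMatrix hE)
  rw [hS]
  obtain ⟨⟨ρ, τ⟩, ⟨hρ, hτ⟩, h⟩ :=
    (hcpt.image continuous_traceDist).sInf_mem ((hPne.prod hEne).image _)
  exact ⟨ρ, hρ, τ, hτ, h⟩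

end

section
open scoped Kronecker

variable {n m : Type*} [Fintype n]

noncomputable def replacementChannel (τ : Matrix m m ℂ) : Matrix n n ℂ →ₗ[ℂ] Matrix m m ℂ :=
  (traceLinearMap n ℂ ℂ).smulRight τ

@[simp]
theorem replacementChannel_apply (τ : Matrix m m ℂ) (X : Matrix n n ℂ) :
    replacementChannel τ X = X.trace • τ :=
  rfl

theorem choiMatrix_replacementChannel [DecidableEq n] [Fintype m] (τ : Matrix m m ℂ) :
    choiMatrix (replacementChannel (n := n) τ) = 1 ⊗ₖ τ := by
  ext ⟨i, k⟩ ⟨j, l⟩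
  by_cases h : i = j
  · subst h; simp [choiMatrix]
  · simp [choiMatrix, h, trace_single_eq_of_ne]

theorem IsDensityMatrix.isCPTP_replacementChannel [DecidableEq n] [Fintype m]
    {τ : Matrix m m ℂ} (hτ : IsDensityMatrix τ) : IsCPTP (replacementChannel (n := n) τ) := by
  refine ⟨?_, fun X => ?_⟩
  · rw [choiMatrix_replacementChannel]
    exact PosSemidef.one.kronecker hτ.1
  · rw [replacementChannel_apply, trace_smul, hτ.2, smul_eq_mul, mul_one]

end

theorem trace_piM (M : ℝ) : (piM M).trace = 1 := by
  simp [piM, Fin.sum_univ_two]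

theorem trace_ket1 : ket1.trace = 1 := by
  simp [ket1, Fin.sum_univ_two]

theorem stmt_12_general {d : ℕ} (ε : ℝ)
    (𝓟 𝓔 : Set (Matrix (Fin d) (Fin d) ℂ))
    (h𝓟ne : 𝓟.Nonempty) (h𝓔ne : 𝓔.Nonempty)
    (h𝓟 : ∀ ρ ∈ 𝓟, IsDensityMatrix ρ) (h𝓔 : ∀ τ ∈ 𝓔, IsDensityMatrix τ)
    (h𝓟cl : IsClosed 𝓟) (h𝓔cl : IsClosed 𝓔)
    (hsep : sInf {r : ℝ | ∃ ρ ∈ 𝓟, ∃ τ ∈ 𝓔, r = traceDist ρ τ} ≤ ε) :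
    ∀ M : ℝ, 1 < M →
      ∃ F : Matrix (Fin 2) (Fin 2) ℂ →ₗ[ℂ] Matrix (Fin d) (Fin d) ℂ,
        IsCPTP F ∧ (∀ M' : ℝ, M ≤ M' → F (piM M') ∈ 𝓔) ∧
        ∃ ρ ∈ 𝓟, traceDist (F ket1) ρ ≤ ε := by
  intro M _
  obtain ⟨ρ, hρ, τ, hτ, hmin⟩ := exists_traceDist_eq_sInf h𝓟ne h𝓔ne h𝓟 h𝓔 h𝓟cl h𝓔cl
  refine ⟨replacementChannel τ, (h𝓔 τ hτ).isCPTP_replacementChannel, fun M' _ => ?_, ρ, hρ, ?_⟩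
  · rwa [replacementChannel_apply, trace_piM, one_smul]
  · rwa [replacementChannel_apply, trace_ket1, one_smul, traceDist_comm, hmin]

/-- for closed `𝓟, 𝓔` with `T(𝓟,𝓔) ≤ ε`, formation from a dirty
battery is achievable for every `M > 1` at zero work cost. -/
theorem stmt_12 {d : ℕ} (ε : ℝ) (hε : ε ∈ Set.Ico (0:ℝ) 1)
    (𝓟 𝓔 : Set (Matrix (Fin d) (Fin d) ℂ))
    (h𝓟ne : 𝓟.Nonempty) (h𝓔ne : 𝓔.Nonempty)
    (h𝓟 : ∀ ρ ∈ 𝓟, IsDensityMatrix ρ) (h𝓔 : ∀ τ ∈ 𝓔, IsDensityMatrix τ)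
    (h𝓟cl : IsClosed 𝓟) (h𝓔cl : IsClosed 𝓔)
    (hsep : sInf {r : ℝ | ∃ ρ ∈ 𝓟, ∃ τ ∈ 𝓔, r = traceDist ρ τ} ≤ ε) :
    ∀ M : ℝ, 1 < M →
      ∃ F : Matrix (Fin 2) (Fin 2) ℂ →ₗ[ℂ] Matrix (Fin d) (Fin d) ℂ,
        IsCPTP F ∧ (∀ M' : ℝ, M ≤ M' → F (piM M') ∈ 𝓔) ∧
        ∃ ρ ∈ 𝓟, traceDist (F ket1) ρ ≤ ε :=
  stmt_12_general ε 𝓟 𝓔 h𝓟ne h𝓔ne h𝓟 h𝓔 h𝓟cl h𝓔cl hsep
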